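/- The matrix exponential of minus t times the Laplacian of the complete graph on N vertices equals e^{-tN} I_N + (1 - e^{-tN})/N · J_N, where J_N is the all-ones matrix. Equivalently, the diagonal entries are 1/N + ((N-1)/N) e^{-Nt} and the off-diagonal entries are 1/N - (1/N) e^{-Nt}. -/

import Mathlib

open Matrix

/-- exp of a scalar multiple of the complement of an idempotent in a Banach algebra. -/
lemma exp_smul_one_sub_idem {𝔸 : Type*} [NormedRing 𝔸] [NormedAlgebra ℝ 𝔸] [CompleteSpace 𝔸]
    (P : 𝔸) (hP : P * P = P) (s : ℝ) :
    NormedSpace.exp (s • (1 - P)) = P + Real.exp s • (1 - P) := by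
  let φ : (ℝ × ℝ) →+* 𝔸 :=
    { toFun := fun x => x.1 • P + x.2 • (1 - P)
      map_one' := by simp
      map_mul' := by
        intro x y
        simp only [Prod.fst_mul, Prod.snd_mul]
        have h1 : P * (1 - P) = 0 := by rw [mul_sub, mul_one, hP, sub_self]
        have h2 : (1 - P) * P = 0 := by rw [sub_mul, one_mul, hP, sub_self]
        have h3 : (1 - P) * (1 - P) = 1 - P := by
          rw [sub_mul, one_mul, mul_sub, mul_one, hP]; abel
        rw [add_mul, mul_add, mul_add, smul_mul_smul_comm, smul_mul_smul_comm,
          smul_mul_smul_comm, smul_mul_smul_comm, hP, h1, h2, h3, smul_zero, smul_zero]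
        abel
      map_zero' := by simp
      map_add' := by
        intro x y
        simp only [Prod.fst_add, Prod.snd_add, add_smul]
        abel }
  have hφc : Continuous φ := by
    show Continuous fun x : ℝ × ℝ => x.1 • P + x.2 • (1 - P)
    fun_prop
  have key : s • (1 - P) = φ (0, s) := by
    show s • (1 - P) = (0:ℝ) • P + s • (1 - P)
    simp
  rw [key, ← NormedSpace.map_exp_of_mem_ball (𝕂 := ℝ) φ hφc _
    ((NormedSpace.expSeries_radius_eq_top ℝ (ℝ × ℝ)).symm ▸ edist_lt_top _ _)]
  have hexp : NormedSpace.exp ((0:ℝ), s) = (1, Real.exp s) := by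
    ext
    · rw [Prod.fst_exp]; simp [NormedSpace.exp_zero]
    · rw [Prod.snd_exp]; simp [Real.exp_eq_exp_ℝ]
  rw [hexp]
  show (1:ℝ) • P + Real.exp s • (1 - P) = P + Real.exp s • (1 - P)
  rw [one_smul]

theorem complete_graph_heat_kernel (N : ℕ) (hN : 1 ≤ N) (t : ℝ) (ht : 0 ≤ t)
    (J : Matrix (Fin N) (Fin N) ℝ) (hJ : J = Matrix.of fun _ _ => (1 : ℝ))
    (L : Matrix (Fin N) (Fin N) ℝ) (hL : L = (N : ℝ) • (1 : Matrix (Fin N) (Fin N) ℝ) - J) :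
    NormedSpace.exp ((-t) • L) =
      Real.exp (-t * N) • (1 : Matrix (Fin N) (Fin N) ℝ)
        + ((1 - Real.exp (-t * N)) / N) • J ∧
    (∀ i : Fin N, NormedSpace.exp ((-t) • L) i i
        = 1 / N + ((N : ℝ) - 1) / N * Real.exp (-(N : ℝ) * t)) ∧
    (∀ i j : Fin N, i ≠ j → NormedSpace.exp ((-t) • L) i j
        = 1 / N - 1 / N * Real.exp (-(N : ℝ) * t)) := by
  letI : SeminormedRing (Matrix (Fin N) (Fin N) ℝ) := Matrix.linftyOpSemiNormedRing
  letI : NormedRing (Matrix (Fin N) (Fin N) ℝ) := Matrix.linftyOpNormedRing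
  letI : NormedAlgebra ℝ (Matrix (Fin N) (Fin N) ℝ) := Matrix.linftyOpNormedAlgebra
  have hN0 : (N : ℝ) ≠ 0 := by positivity
  set P : Matrix (Fin N) (Fin N) ℝ := ((N : ℝ)⁻¹) • J with hP_def
  have hJJ : J * J = (N : ℝ) • J := by
    subst hJ
    ext i j
    simp [Matrix.mul_apply, Matrix.smul_apply]
  have hP : P * P = P := by
    rw [hP_def, smul_mul_smul_comm, hJJ, smul_smul]
    congr 1
    field_simp
  have hNP : (N : ℝ) • P = J := by
    rw [hP_def, smul_smul, mul_inv_cancel₀ hN0, one_smul]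
  have hLP : (-t) • L = (-t * N) • (1 - P) := by
    rw [hL, ← hNP, smul_sub, smul_smul]
    rw [mul_comm (-t) (N:ℝ)]
    rw [smul_sub]
    congr 1
    rw [smul_smul]
    ring_nf
  have main : NormedSpace.exp ((-t) • L) =
      Real.exp (-t * N) • (1 : Matrix (Fin N) (Fin N) ℝ)
        + ((1 - Real.exp (-t * N)) / N) • J := by
    rw [hLP]
    erw [exp_smul_one_sub_idem P hP (-t * N)]
    rw [hP_def]
    match_scalars <;> field_simp <;> ring
  refine ⟨main, ?_, ?_⟩
  · intro i
    rw [main]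
    have : Real.exp (-t * N) = Real.exp (-(N:ℝ) * t) := by ring_nf
    rw [Matrix.add_apply, Matrix.smul_apply, Matrix.smul_apply, Matrix.one_apply_eq, hJ]
    simp only [Matrix.of_apply, smul_eq_mul, mul_one, this]
    field_simp
    ring
  · intro i j hij
    rw [main]
    have : Real.exp (-t * N) = Real.exp (-(N:ℝ) * t) := by ring_nf
    rw [Matrix.add_apply, Matrix.smul_apply, Matrix.smul_apply, Matrix.one_apply_ne hij, hJ]
    simp only [Matrix.of_apply, smul_eq_mul, mul_one, mul_zero, this]
    field_simp
    ring
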